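/- There exists a real constant ε₀ > 0 such that for every real ε with 0 < ε < ε₀, every simple graph G on a finite vertex set, every nontrivial cluster C of the agreement decomposition of G with parameter ε, and every vertex u ∈ C, it holds that |N(u) ∩ C| ≥ (1 − 9ε)·|C|. -/

import Mathlib

open scoped symmDiff Classical

/-- Two vertices `u, v` are in `ε`-agreement in `G` if
`|N(u) △ N(v)| < ε·max(|N(u)|, |N(v)|)`. -/
def InAgreement {V : Type*} [Fintype V] [DecidableEq V]
    (G : SimpleGraph V) [DecidableRel G.Adj] (ε : ℝ) (u v : V) : Prop :=
  ((G.neighborFinset u ∆ G.neighborFinset v).card : ℝ) <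
    ε * (max (G.neighborFinset u).card (G.neighborFinset v).card : ℕ)

/-- A vertex is `ε`-heavy if it is in `ε`-agreement with more than a
`(1 − ε)`-fraction of its neighbors. -/
noncomputable def Heavy {V : Type*} [Fintype V] [DecidableEq V]
    (G : SimpleGraph V) [DecidableRel G.Adj] (ε : ℝ) (u : V) : Prop :=
  (1 - ε) * ((G.neighborFinset u).card : ℝ) <
    (((G.neighborFinset u).filter (fun v => InAgreement G ε u v)).card : ℝ)

/-- The graph `G̃` obtained from `G` by deleting every edge whose endpoints are
not in `ε`-agreement and then every remaining edge both of whose endpoints are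
`ε`-light. -/
noncomputable def tildeGraph {V : Type*} [Fintype V] [DecidableEq V]
    (G : SimpleGraph V) [DecidableRel G.Adj] (ε : ℝ) : SimpleGraph V where
  Adj u v := G.Adj u v ∧ InAgreement G ε u v ∧ (Heavy G ε u ∨ Heavy G ε v)
  symm := ⟨by
    intro u v ⟨h1, h2, h3⟩
    refine ⟨h1.symm, ?_, h3.symm⟩
    unfold InAgreement at h2 ⊢
    rwa [symmDiff_comm, max_comm]⟩
  loopless := ⟨fun u h => G.irrefl h.1⟩

/-- `C` is a cluster of the agreement decomposition of `G` with parameter `ε`: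
the vertex set of a connected component of `G̃`. -/
noncomputable def IsCluster {V : Type*} [Fintype V] [DecidableEq V]
    (G : SimpleGraph V) [DecidableRel G.Adj] (ε : ℝ) (C : Finset V) : Prop :=
  ∃ v : V, C = Finset.univ.filter (fun w => (tildeGraph G ε).Reachable v w)

/-!
Call `u, v` δ-close if `|N(u) △ N(v)| ≤ δ · max(d(u), d(v))`. Closeness composes (with a
small loss), and δ-close vertices have degrees within a factor `1 - δ`. Heavy vertices `u, w`
whose neighbourhoods overlap in more than `ε(d(u) + d(w))` vertices share a neighbour in
agreement with both, hence are `2ε/(1-ε)`-close. Since every edge of `G̃` has a heavy endpoint, this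
self-improving bound propagates along paths of `G̃`: all heavy vertices of a cluster `C` are
mutually close, and every vertex of `C` is `4ε`-close to each of them.

Fix a heavy `h ∈ C` that is `ε`-close to `u`. A neighbour of `h` in agreement with `h` is joined
to it in `G̃`, so fewer than `ε d(h)` neighbours of `h` leave `C`, whence
`|N(u) ∩ C| ≥ (1 - 3ε) d(h)`. Double counting the edges between `C` and `S = C \ N[h]` (each
vertex of `S` has almost `d(h)` neighbours in `C`, each vertex of `C` at most about `4ε d(h)` in
`S`) gives `|S| ≤ (4ε + O(ε²))|C|`, and the `G̃`-edge at `h` forces `ε d(h) > 2(1 - ε)`.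
Then `|C| ≤ |S| + 1 + d(h)` yields the claim for `ε ≤ 1/100`.
-/

open Finset SimpleGraph

lemma Finset.card_sdiff_le_card_symmDiff {α : Type*} [DecidableEq α] (s t : Finset α) :
    #(s \ t) ≤ #(s ∆ t) :=
  card_le_card <| by rw [symmDiff_def]; exact subset_union_left

lemma Finset.card_le_card_inter_add_card_symmDiff {α : Type*} [DecidableEq α]
    (s t : Finset α) : #s ≤ #(s ∩ t) + #(s ∆ t) := by
  have := card_sdiff_add_card_inter s t
  have := card_sdiff_le_card_symmDiff s t
  omega

lemma Finset.card_symmDiff_le_add {α : Type*} [DecidableEq α] (s t u : Finset α) :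
    #(s ∆ u) ≤ #(s ∆ t) + #(t ∆ u) :=
  (card_le_card (symmDiff_triangle s t u)).trans (card_union_le _ _)

variable {V : Type*} [Fintype V] [DecidableEq V] {G : SimpleGraph V} [DecidableRel G.Adj]
  {ε δ a b : ℝ} {u v w : V}

namespace SimpleGraph

variable (G) in
def Close (δ : ℝ) (u v : V) : Prop :=
  (#(G.neighborFinset u ∆ G.neighborFinset v) : ℝ) ≤ δ * max (G.degree u : ℝ) (G.degree v)

lemma degree_le_degree_add_card_symmDiff (u v : V) :
    (G.degree u : ℝ) ≤ G.degree v + #(G.neighborFinset u ∆ G.neighborFinset v) := by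
  have := card_le_card_inter_add_card_symmDiff (G.neighborFinset u) (G.neighborFinset v)
  have := card_le_card (inter_subset_right (s₁ := G.neighborFinset u)
    (s₂ := G.neighborFinset v))
  rw [← card_neighborFinset_eq_degree, ← card_neighborFinset_eq_degree]
  exact_mod_cast (by omega)

lemma close_self (hδ : 0 ≤ δ) (u : V) : G.Close δ u u := by
  simp only [Close, symmDiff_self, bot_eq_empty, card_empty, CharP.cast_eq_zero, max_self]
  positivity

namespace Close

lemma symm (h : G.Close δ u v) : G.Close δ v u := by
  rwa [Close, symmDiff_comm, max_comm]

lemma mono (h : G.Close a u v) (hab : a ≤ b) : G.Close b u v :=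
  h.trans (mul_le_mul_of_nonneg_right hab (le_max_of_le_left (Nat.cast_nonneg _)))

lemma one_sub_mul_max_le (h : G.Close δ u v) :
    (1 - δ) * max (G.degree u : ℝ) (G.degree v) ≤ G.degree u := by
  have hv := G.degree_le_degree_add_card_symmDiff v u
  rw [symmDiff_comm] at hv
  have hsd : (0 : ℝ) ≤ #(G.neighborFinset u ∆ G.neighborFinset v) := Nat.cast_nonneg _
  unfold Close at h
  rcases max_choice (G.degree u : ℝ) (G.degree v) with hm | hm <;> rw [hm] at h ⊢ <;> linarith

lemma trans (huv : G.Close a u v) (hvw : G.Close b v w) (ha : 0 ≤ a) (hb : 0 ≤ b)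
    (hb1 : b < 1) :
    G.Close ((a + b) / (1 - b)) u w := by
  set M := max (G.degree u : ℝ) (G.degree w)
  have hw : (1 - b) * max (G.degree v : ℝ) (G.degree w) ≤ M := by
    have := hvw.symm.one_sub_mul_max_le
    rw [max_comm] at this
    exact this.trans (le_max_right _ _)
  have hu : (1 - b) * max (G.degree u : ℝ) (G.degree v) ≤ M := by
    rcases max_choice (G.degree u : ℝ) (G.degree v) with hm | hm <;> rw [hm]
    · nlinarith [le_max_left (G.degree u : ℝ) (G.degree w),
        (Nat.cast_nonneg _ : (0 : ℝ) ≤ G.degree u)]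
    · exact (mul_le_mul_of_nonneg_left (le_max_left _ _) (by linarith)).trans hw
  have htri := card_symmDiff_le_add (G.neighborFinset u) (G.neighborFinset v) (G.neighborFinset w)
  have htri' : (#(G.neighborFinset u ∆ G.neighborFinset w) : ℝ) ≤
      #(G.neighborFinset u ∆ G.neighborFinset v) +
        #(G.neighborFinset v ∆ G.neighborFinset w) := by
    exact_mod_cast htri
  unfold Close at huv hvw ⊢
  rw [div_mul_eq_mul_div, le_div_iff₀ (by linarith)]
  nlinarith [mul_le_mul_of_nonneg_left hu ha, mul_le_mul_of_nonneg_left hw hb]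

lemma trans_of_le_half (huv : G.Close a u v) (hvw : G.Close b v w) (ha : 0 ≤ a) (hb : 0 ≤ b)
    (hb1 : b ≤ 1 / 2) : G.Close (2 * (a + b)) u w :=
  (huv.trans hvw ha hb (by linarith)).mono <| by
    rw [div_le_iff₀ (by linarith)]
    nlinarith

end Close

end SimpleGraph

lemma inAgreement_iff : InAgreement G ε u v ↔
    (#(G.neighborFinset u ∆ G.neighborFinset v) : ℝ) <
      ε * max (G.degree u : ℝ) (G.degree v) := by
  rw [InAgreement, Nat.cast_max]
  rfl

lemma InAgreement.close (h : InAgreement G ε u v) : G.Close ε u v :=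
  (inAgreement_iff.mp h).le

namespace Heavy

lemma card_filter_not_inAgreement_lt (h : Heavy G ε u) :
    (#{v ∈ G.neighborFinset u | ¬InAgreement G ε u v} : ℝ) < ε * G.degree u := by
  have hsplit := card_filter_add_card_filter_not (s := G.neighborFinset u) (InAgreement G ε u)
  rw [card_neighborFinset_eq_degree] at hsplit
  unfold Heavy at h
  rw [card_neighborFinset_eq_degree] at h
  have : (#{v ∈ G.neighborFinset u | InAgreement G ε u v} : ℝ) +
      #{v ∈ G.neighborFinset u | ¬InAgreement G ε u v} = G.degree u := by exact_mod_cast hsplit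
  linarith

lemma degree_pos (h : Heavy G ε u) : 0 < (G.degree u : ℝ) := by
  have hle : (#{v ∈ G.neighborFinset u | InAgreement G ε u v} : ℝ) ≤ G.degree u := by
    exact_mod_cast card_filter_le _ _
  unfold Heavy at h
  rw [card_neighborFinset_eq_degree] at h
  by_contra! h0
  have : (G.degree u : ℝ) = 0 := le_antisymm h0 (Nat.cast_nonneg _)
  rw [this, mul_zero] at h
  linarith

lemma close_of_lt_card_inter (hu : Heavy G ε u) (hw : Heavy G ε w) (hε : 0 ≤ ε)
    (hε1 : ε < 1)
    (hinter : ε * G.degree u + ε * G.degree w < #(G.neighborFinset u ∩ G.neighborFinset w)) :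
    G.Close (2 * ε / (1 - ε)) u w := by
  obtain ⟨y, hyu, hyw⟩ : ∃ y, InAgreement G ε u y ∧ InAgreement G ε w y := by
    by_contra! hnone
    have hsub : G.neighborFinset u ∩ G.neighborFinset w ⊆
        {v ∈ G.neighborFinset u | ¬InAgreement G ε u v} ∪
          {v ∈ G.neighborFinset w | ¬InAgreement G ε w v} := by
      intro y hy
      rw [mem_inter] at hy
      by_cases hay : InAgreement G ε u y
      · exact mem_union_right _ (mem_filter.mpr ⟨hy.2, hnone y hay⟩)
      · exact mem_union_left _ (mem_filter.mpr ⟨hy.1, hay⟩)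
    have hcard : (#(G.neighborFinset u ∩ G.neighborFinset w) : ℝ) ≤
        #{v ∈ G.neighborFinset u | ¬InAgreement G ε u v} +
          #{v ∈ G.neighborFinset w | ¬InAgreement G ε w v} := by
      exact_mod_cast (card_le_card hsub).trans (card_union_le _ _)
    linarith [hu.card_filter_not_inAgreement_lt, hw.card_filter_not_inAgreement_lt]
  have := hyu.close.trans hyw.close.symm hε hε hε1
  rwa [← two_mul] at this

lemma close_of_close (hu : Heavy G ε u) (hw : Heavy G ε w) (hε : 0 ≤ ε) (hε1 : ε < 1 / 4)
    (huw : G.Close (1 / 4) u w) : G.Close (2 * ε / (1 - ε)) u w := by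
  refine hu.close_of_lt_card_inter hw hε (by linarith) ?_
  have hinter := card_le_card_inter_add_card_symmDiff (G.neighborFinset u) (G.neighborFinset w)
  rw [card_neighborFinset_eq_degree] at hinter
  have hinter' : (G.degree u : ℝ) ≤ #(G.neighborFinset u ∩ G.neighborFinset w) +
      #(G.neighborFinset u ∆ G.neighborFinset w) := by exact_mod_cast hinter
  have hmax := huw.one_sub_mul_max_le
  have hpos : 0 < max (G.degree u : ℝ) (G.degree w) := lt_max_of_lt_left hu.degree_pos
  have hdw := le_max_right (G.degree u : ℝ) (G.degree w)
  unfold Close at huw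
  nlinarith [mul_lt_mul_of_pos_right hε1 hpos]

lemma close_of_reachable (hu : Heavy G ε u) (hw : Heavy G ε w) (hε : 0 ≤ ε)
    (hε1 : ε ≤ 1 / 100) (huw : (tildeGraph G ε).Reachable u w) :
    G.Close (2 * ε / (1 - ε)) u w := by
  set κ := 2 * ε / (1 - ε)
  have hκ0 : 0 ≤ κ := div_nonneg (by linarith) (by linarith)
  have hκ : κ ≤ 3 * ε := by
    rw [div_le_iff₀ (by linarith)]
    nlinarith
  have upgrade :
      ∀ {c : ℝ} {x : V}, Heavy G ε x → G.Close c u x → c ≤ 1 / 4 → G.Close κ u x :=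
    fun hx hux hc => hu.close_of_close hx hε (by linarith) (hux.mono hc)
  -- every vertex of the component lies within one `G̃`-edge of a heavy vertex `κ`-close to `u`
  have key : ∀ x, (tildeGraph G ε).Reachable u x →
      ∃ m, Heavy G ε m ∧ G.Close κ u m ∧ G.Close ε m x := by
    intro x hx
    rw [reachable_iff_reflTransGen] at hx
    induction hx with
    | refl => exact ⟨u, hu, close_self hκ0 u, close_self hε u⟩
    | @tail x y _ hxy ih =>
      obtain ⟨m, hm, hum, hmx⟩ := ih
      have hux := hum.trans_of_le_half hmx hκ0 hε (by linarith)
      have huy := hux.trans_of_le_half hxy.2.1.close (by positivity) hε (by linarith)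
      rcases hxy.2.2 with hx | hy
      · exact ⟨x, hx, upgrade hx hux (by linarith), hxy.2.1.close⟩
      · exact ⟨y, hy, upgrade hy huy (by linarith), close_self hε y⟩
  obtain ⟨m, hm, hum, hmw⟩ := key w huw
  exact upgrade hw (hum.trans_of_le_half hmw hκ0 hε (by linarith)) (by linarith)

end Heavy

lemma two_le_card_symmDiff_of_adj (h : G.Adj u v) :
    2 ≤ #(G.neighborFinset u ∆ G.neighborFinset v) := by
  rw [← card_pair h.ne]
  refine card_le_card fun x hx => ?_
  rcases mem_insert.mp hx with rfl | hx
  · simp [mem_symmDiff, h.symm]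
  · rw [mem_singleton] at hx
    subst hx
    simp [mem_symmDiff, h]

lemma two_mul_one_sub_lt_mul_degree (h : (tildeGraph G ε).Adj u v) (hε : 0 ≤ ε)
    (hε1 : ε < 1) :
    2 * (1 - ε) < ε * G.degree u := by
  have h2 : (2 : ℝ) ≤ #(G.neighborFinset u ∆ G.neighborFinset v) := by
    exact_mod_cast two_le_card_symmDiff_of_adj h.1
  have hlt := inAgreement_iff.mp h.2.1
  have hmax := h.2.1.close.one_sub_mul_max_le
  nlinarith [mul_lt_mul_of_pos_left hlt (sub_pos.mpr hε1), mul_le_mul_of_nonneg_left hmax hε]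

lemma card_mul_le_card_mul_of_le_card_inter (A B : Finset V) {m n : ℝ}
    (hm : ∀ v ∈ A, m ≤ #(G.neighborFinset v ∩ B))
    (hn : ∀ w ∈ B, (#(G.neighborFinset w ∩ A) : ℝ) ≤ n) : #A * m ≤ #B * n := by
  have hA : ∀ v, B.bipartiteAbove G.Adj v = G.neighborFinset v ∩ B := fun v => by
    ext; simp [bipartiteAbove, and_comm]
  have hB : ∀ w, A.bipartiteBelow G.Adj w = G.neighborFinset w ∩ A := fun w => by
    ext; simp [bipartiteBelow, and_comm, G.adj_comm]
  simpa only [nsmul_eq_mul] using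
    card_nsmul_le_card_nsmul G.Adj (fun v hv => (hA v).symm ▸ hm v hv)
      fun w hw => (hB w).symm ▸ hn w hw

namespace IsCluster

variable {C : Finset V} {h : V}

lemma reachable (hC : IsCluster G ε C) (hu : u ∈ C) (hv : v ∈ C) :
    (tildeGraph G ε).Reachable u v := by
  obtain ⟨v₀, rfl⟩ := hC
  simp only [mem_filter, mem_univ, true_and] at hu hv
  exact hu.symm.trans hv

lemma mem_of_adj (hC : IsCluster G ε C) (hu : u ∈ C) (h : (tildeGraph G ε).Adj u v) :
    v ∈ C := by
  obtain ⟨v₀, rfl⟩ := hC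
  simp only [mem_filter, mem_univ, true_and] at hu ⊢
  exact hu.trans h.reachable

lemma exists_adj (hC : IsCluster G ε C) (hC1 : 1 < #C) (hu : u ∈ C) :
    ∃ v, (tildeGraph G ε).Adj u v := by
  obtain ⟨v, hv, hvu⟩ := exists_mem_ne hC1 u
  obtain ⟨p⟩ := hC.reachable hu hv
  exact ⟨_, p.adj_snd (p.not_nil_of_ne hvu.symm)⟩

lemma exists_heavy_close (hC : IsCluster G ε C) (hC1 : 1 < #C) (hu : u ∈ C) (hε : 0 ≤ ε) :
    ∃ h ∈ C, Heavy G ε h ∧ G.Close ε u h := by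
  by_cases hH : Heavy G ε u
  · exact ⟨u, hu, hH, close_self hε u⟩
  obtain ⟨v, huv⟩ := hC.exists_adj hC1 hu
  exact ⟨v, hC.mem_of_adj hu huv, huv.2.2.resolve_left hH, huv.2.1.close⟩

lemma card_neighborFinset_sdiff_lt (hC : IsCluster G ε C) (hh : h ∈ C) (hH : Heavy G ε h) :
    (#(G.neighborFinset h \ C) : ℝ) < ε * G.degree h := by
  refine lt_of_le_of_lt ?_ hH.card_filter_not_inAgreement_lt
  refine Nat.cast_le.mpr (card_le_card fun y hy => ?_)
  rw [mem_sdiff] at hy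
  refine mem_filter.mpr ⟨hy.1, fun hA => hy.2 (hC.mem_of_adj hh ?_)⟩
  exact ⟨(mem_neighborFinset _ _ _).mp hy.1, hA, Or.inl hH⟩

lemma one_sub_mul_max_le_card_inter (hC : IsCluster G ε C) (hh : h ∈ C) (hH : Heavy G ε h)
    (hvh : G.Close δ v h) (hε : 0 ≤ ε) :
    (1 - 2 * δ - ε) * max (G.degree v : ℝ) (G.degree h) ≤ #(G.neighborFinset v ∩ C) := by
  have hsplit : G.neighborFinset v \ C ⊆
      (G.neighborFinset v \ G.neighborFinset h) ∪ (G.neighborFinset h \ C) := by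
    intro y hy
    simp only [mem_sdiff, mem_union] at hy ⊢
    tauto
  have hout : (#(G.neighborFinset v \ C) : ℝ) ≤
      #(G.neighborFinset v ∆ G.neighborFinset h) + #(G.neighborFinset h \ C) := by
    have := (card_le_card hsplit).trans (card_union_le _ _)
    have := card_sdiff_le_card_symmDiff (G.neighborFinset v) (G.neighborFinset h)
    exact_mod_cast (by omega)
  have hdeg : (#(G.neighborFinset v ∩ C) : ℝ) + #(G.neighborFinset v \ C) = G.degree v := by
    rw [← card_neighborFinset_eq_degree]
    exact_mod_cast card_inter_add_card_sdiff _ _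
  have hhC := hC.card_neighborFinset_sdiff_lt hh hH
  have hmax := hvh.one_sub_mul_max_le
  have hdh := mul_le_mul_of_nonneg_left (le_max_right (G.degree v : ℝ) (G.degree h)) hε
  unfold Close at hvh
  linarith

lemma close_of_heavy (hC : IsCluster G ε C) (hC1 : 1 < #C) (hw : w ∈ C) (hh : h ∈ C)
    (hH : Heavy G ε h) (hε : 0 ≤ ε) (hε1 : ε ≤ 1 / 100) : G.Close (4 * ε) w h := by
  obtain ⟨p, hp, hpH, hwp⟩ := hC.exists_heavy_close hC1 hw hε
  have hph := hpH.close_of_reachable hH hε hε1 (hC.reachable hp hh)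
  set κ := 2 * ε / (1 - ε)
  have hκ : κ * (1 - ε) = 2 * ε := div_mul_cancel₀ _ (by linarith)
  have hκ0 : 0 ≤ κ := div_nonneg (by linarith) (by linarith)
  have hκ1 : κ < 1 / 2 := by nlinarith
  refine (hwp.trans hph hε hκ0 (by linarith)).mono ?_
  rw [div_le_iff₀ (by linarith)]
  nlinarith

lemma card_sdiff_insert_neighborFinset_le (hC : IsCluster G ε C) (hC1 : 1 < #C) (hh : h ∈ C)
    (hH : Heavy G ε h) (hε : 0 ≤ ε) (hε1 : ε ≤ 1 / 100) :
    (1 - 3 * ε) * (1 - 4 * ε) ^ 2 * #(C \ insert h (G.neighborFinset h)) ≤ 4 * ε * #C := by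
  set S := C \ insert h (G.neighborFinset h)
  have hD : 0 < (G.degree h : ℝ) := hH.degree_pos
  have hm : ∀ v ∈ S,
      (1 - 3 * ε) * (1 - 4 * ε) * G.degree h ≤ #(G.neighborFinset v ∩ C) := by
    intro v hv
    have hvC := (mem_sdiff.mp hv).1
    obtain ⟨p, hp, hpH, hvp⟩ := hC.exists_heavy_close hC1 hvC hε
    have hinter := hC.one_sub_mul_max_le_card_inter hp hpH hvp hε
    have hvh := (hC.close_of_heavy hC1 hvC hh hH hε hε1).one_sub_mul_max_le
    calc (1 - 3 * ε) * (1 - 4 * ε) * G.degree h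
        ≤ (1 - 3 * ε) * ((1 - 4 * ε) * max (G.degree v : ℝ) (G.degree h)) := by
          rw [mul_assoc]
          gcongr
          · linarith
          · linarith
          · exact le_max_right _ _
      _ ≤ (1 - 3 * ε) * max (G.degree v : ℝ) (G.degree p) := by
          gcongr
          · linarith
          · exact hvh.trans (le_max_left _ _)
      _ ≤ #(G.neighborFinset v ∩ C) := by linarith
  have hn : ∀ w ∈ C,
      (#(G.neighborFinset w ∩ S) : ℝ) ≤ 4 * ε * G.degree h / (1 - 4 * ε) := by
    intro w hw
    have hsub : G.neighborFinset w ∩ S ⊆ G.neighborFinset w \ G.neighborFinset h := by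
      intro y hy
      simp only [S, mem_inter, mem_sdiff, mem_insert, not_or] at hy
      exact mem_sdiff.mpr ⟨hy.1, hy.2.2.2⟩
    have hcard :
        (#(G.neighborFinset w ∩ S) : ℝ) ≤ #(G.neighborFinset w ∆ G.neighborFinset h) := by
      exact_mod_cast (card_le_card hsub).trans (card_sdiff_le_card_symmDiff _ _)
    have hwh := hC.close_of_heavy hC1 hw hh hH hε hε1
    have hhw := hwh.symm.one_sub_mul_max_le
    rw [max_comm] at hhw
    unfold Close at hwh
    rw [le_div_iff₀ (by linarith)]
    nlinarith
  have := card_mul_le_card_mul_of_le_card_inter S C hm hn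
  rw [mul_div_assoc', le_div_iff₀ (by linarith)] at this
  nlinarith

end IsCluster

lemma le_of_cluster_bounds {ε c s D n : ℝ} (hε : 0 < ε) (hε1 : ε ≤ 1 / 100)
    (hs : (1 - 3 * ε) * (1 - 4 * ε) ^ 2 * s ≤ 4 * ε * c) (hc : c ≤ s + 1 + D)
    (hD : 2 * (1 - ε) < ε * D) (hn : (1 - 3 * ε) * D ≤ n) : (1 - 9 * ε) * c ≤ n := by
  set p := (1 - 3 * ε) * (1 - 4 * ε) ^ 2
  have hp : 1 - 11 * ε ≤ p := by nlinarith [mul_pos hε hε, mul_pos (mul_pos hε hε) hε]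
  have hp1 : p ≤ 1 := by nlinarith [mul_pos hε hε, mul_pos (mul_pos hε hε) hε]
  have hcard : (p - 4 * ε) * c ≤ p * (1 + D) := by nlinarith
  have hpoly : (1 - 9 * ε) * p * (2 - ε) ≤ 2 * (1 - ε) * (1 - 3 * ε) * (p - 4 * ε) := by
    nlinarith [mul_pos hε hε, mul_pos (mul_pos hε hε) hε]
  have hX : 0 < 2 * (1 - ε) * (p - 4 * ε) := by nlinarith
  refine le_trans ?_ hn
  refine le_of_mul_le_mul_right ?_ hX
  calc (1 - 9 * ε) * c * (2 * (1 - ε) * (p - 4 * ε))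
      ≤ (1 - 9 * ε) * (2 * (1 - ε)) * (p * (1 + D)) := by nlinarith
    _ ≤ (1 - 9 * ε) * p * (2 - ε) * D := by
      nlinarith [mul_le_mul_of_nonneg_left hD.le (by nlinarith : 0 ≤ (1 - 9 * ε) * p)]
    _ ≤ 2 * (1 - ε) * (1 - 3 * ε) * (p - 4 * ε) * D := by nlinarith
    _ = (1 - 3 * ε) * D * (2 * (1 - ε) * (p - 4 * ε)) := by ring

/-- Property 4: for every nontrivial cluster `C` of the agreement decomposition
and every `u ∈ C`, `|N(u) ∩ C| ≥ (1 − 9ε)·|C|`. -/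
theorem cluster_nbr_inter_cluster_ge_of_cluster :
    ∃ ε₀ : ℝ, 0 < ε₀ ∧
      ∀ (V : Type) (_ : Fintype V) (_ : DecidableEq V)
        (G : SimpleGraph V) (_ : DecidableRel G.Adj) (ε : ℝ), 0 < ε → ε < ε₀ →
        ∀ C : Finset V, IsCluster G ε C → 1 < C.card →
          ∀ u ∈ C, (1 - 9 * ε) * (C.card : ℝ) ≤
            ((G.neighborFinset u ∩ C).card : ℝ) := by
  refine ⟨1 / 100, by norm_num, fun V _ _ G _ ε hε hε₀ C hC hC1 u hu => ?_⟩
  obtain ⟨h, hh, hH, huh⟩ := hC.exists_heavy_close hC1 hu hε.le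
  obtain ⟨v, hhv⟩ := hC.exists_adj hC1 hh
  have hcard : (#C : ℝ) ≤ #(C \ insert h (G.neighborFinset h)) + 1 + G.degree h := by
    have := card_le_card_sdiff_add_card (s := C) (t := insert h (G.neighborFinset h))
    have := card_insert_le h (G.neighborFinset h)
    rw [card_neighborFinset_eq_degree] at this
    exact_mod_cast (by omega)
  have hu' := hC.one_sub_mul_max_le_card_inter hh hH huh hε.le
  refine le_of_cluster_bounds hε hε₀.le
    (hC.card_sdiff_insert_neighborFinset_le hC1 hh hH hε.le hε₀.le) hcard
    (two_mul_one_sub_lt_mul_degree hhv hε.le (by linarith)) ?_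
  nlinarith [le_max_right (G.degree u : ℝ) (G.degree h)]
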